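/- (Finite-length form of Theorem 1.) Let μ be a pairwise-independent ensemble with M' ≥ 2 codewords and marginal Q, let ρ ≥ 1 and γ > 1, and define Φ(c) = #{ m ∈ {1,…,M'} : P_{e,m}(c) ≤ γ^ρ · ( (M' − 1) · ∑_{x,x'∈𝒳^n} Q(x)Q(x')·Z(x,x')^{1/ρ} )^ρ }. Then μ[ Φ(C) ≥ M'(1 − 1/√γ) ] ≥ 1 − 1/√γ. -/

import Mathlib

open scoped Classical

/-- `W` is a channel: nonnegative, and each row sums to one. -/
def IsChannel {𝒳 𝒴 : Type*} [Fintype 𝒴] (W : 𝒳 → 𝒴 → ℝ) : Prop :=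
  (∀ x y, 0 ≤ W x y) ∧ ∀ x, ∑ y, W x y = 1

/-- Maximum-likelihood error probability of message `m` under code `c`
(ties counted as errors). -/
noncomputable def Pem {𝒳 𝒴 : Type*} [Fintype 𝒴] {M : ℕ}
    (W : 𝒳 → 𝒴 → ℝ) (c : Fin M → 𝒳) (m : Fin M) : ℝ :=
  ∑ y, W (c m) y * (if ∃ k, k ≠ m ∧ W (c m) y ≤ W (c k) y then (1:ℝ) else 0)

/-- Bhattacharyya coefficient between inputs `x` and `x'`. -/
noncomputable def Bhat {𝒳 𝒴 : Type*} [Fintype 𝒴] (W : 𝒳 → 𝒴 → ℝ) (x x' : 𝒳) : ℝ :=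
  ∑ y, Real.sqrt (W x y * W x' y)

/-- `p` is a probability mass function on a finite type. -/
def IsPMF {α : Type*} [Fintype α] (p : α → ℝ) : Prop :=
  (∀ a, 0 ≤ p a) ∧ ∑ a, p a = 1

/-- Probability of the event `S` under the pmf `μ`. -/
noncomputable def pmfProb {α : Type*} [Fintype α] (μ : α → ℝ) (S : α → Prop) : ℝ :=
  ∑ a, if S a then μ a else 0

/-- Expectation of `f` under the pmf `μ`. -/
noncomputable def pmfExp {α : Type*} [Fintype α] (μ : α → ℝ) (f : α → ℝ) : ℝ :=
  ∑ a, μ a * f a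

/-- `μ` is a pairwise-independent ensemble of `M` codewords with marginal `Q`:
each codeword has law `Q` and each pair of distinct codewords has law `Q × Q`. -/
def PairwiseIndepEnsemble {𝒳 : Type*} [Fintype 𝒳] {M : ℕ}
    (μ : (Fin M → 𝒳) → ℝ) (Q : 𝒳 → ℝ) : Prop :=
  IsPMF μ ∧ IsPMF Q ∧
  (∀ (m : Fin M) (x : 𝒳), pmfProb μ (fun c => c m = x) = Q x) ∧
  (∀ (m k : Fin M), m ≠ k → ∀ (x x' : 𝒳),
    pmfProb μ (fun c => c m = x ∧ c k = x') = Q x * Q x')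

/-! On the error event of message `m` some competitor `k` has `W (c m) y ≤ W (c k) y`, so the
union bound gives `P_{e,m} ≤ ∑_{k ≠ m} Z(x_m, x_k)`. Since `t ↦ t ^ (1/ρ)` is subadditive for
`ρ ≥ 1`, pairwise independence bounds `E[P_{e,m} ^ (1/ρ)]` by `(M' - 1) ∑ Q Q Z ^ (1/ρ)`, and
Markov's inequality makes each message violate the bound with probability at most `1/γ`.
The expected number of violating messages is then at most `M'/γ`, and a second application of
Markov's inequality shows that more than `M'/√γ` of them violate it with probability at most
`1/√γ`. -/

open Finset

lemma Real.rpow_sum_le_sum_rpow {ι : Type*} (s : Finset ι) {f : ι → ℝ} (hf : ∀ i ∈ s, 0 ≤ f i)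
    {p : ℝ} (hp : 0 < p) (hp1 : p ≤ 1) :
    (∑ i ∈ s, f i) ^ p ≤ ∑ i ∈ s, f i ^ p :=
  le_sum_of_subadditive_on_pred (· ^ p) (0 ≤ ·) (Real.zero_rpow hp.ne').le
    (fun _ _ ha hb => Real.rpow_add_le_add_rpow ha hb hp.le hp1) (fun _ _ => add_nonneg) f hf

section Pmf

variable {α : Type*} [Fintype α] {μ : α → ℝ}

lemma pmfProb_eq_pmfExp_indicator (S : α → Prop) :
    pmfProb μ S = pmfExp μ (fun a => if S a then 1 else 0) := by
  simp only [pmfProb, pmfExp, mul_ite, mul_one, mul_zero]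

lemma pmfProb_not (hμ : IsPMF μ) (S : α → Prop) :
    pmfProb μ (fun a => ¬ S a) = 1 - pmfProb μ S := by
  rw [← hμ.2, pmfProb, pmfProb, ← sum_sub_distrib]
  refine sum_congr rfl fun a _ => ?_
  split_ifs <;> simp

lemma pmfExp_nonneg (hμ : ∀ a, 0 ≤ μ a) {f : α → ℝ} (hf : ∀ a, 0 ≤ f a) :
    0 ≤ pmfExp μ f :=
  sum_nonneg fun a _ => mul_nonneg (hμ a) (hf a)

lemma pmfExp_mono (hμ : ∀ a, 0 ≤ μ a) {f g : α → ℝ} (hfg : ∀ a, f a ≤ g a) :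
    pmfExp μ f ≤ pmfExp μ g :=
  sum_le_sum fun a _ => mul_le_mul_of_nonneg_left (hfg a) (hμ a)

lemma pmfExp_sum {ι : Type*} (s : Finset ι) (f : ι → α → ℝ) :
    pmfExp μ (fun a => ∑ i ∈ s, f i a) = ∑ i ∈ s, pmfExp μ (f i) := by
  simp only [pmfExp, mul_sum]
  exact sum_comm

lemma pmfExp_card_filter {ι : Type*} [Fintype ι] (S : ι → α → Prop)
    [∀ i a, Decidable (S i a)] :
    pmfExp μ (fun a => (#{i | S i a} : ℝ)) = ∑ i, pmfProb μ (S i) := by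
  simp only [pmfProb_eq_pmfExp_indicator, ← pmfExp_sum, natCast_card_filter]
  congr!

lemma mul_pmfProb_lt_le_pmfExp (hμ : ∀ a, 0 ≤ μ a) {f : α → ℝ} (hf : ∀ a, 0 ≤ f a) (t : ℝ) :
    t * pmfProb μ (fun a => t < f a) ≤ pmfExp μ f := by
  rw [pmfProb, mul_sum]
  refine sum_le_sum fun a _ => ?_
  split_ifs with h
  · rw [mul_comm]
    exact mul_le_mul_of_nonneg_left h.le (hμ a)
  · simpa using mul_nonneg (hμ a) (hf a)

lemma pmfProb_pos_eq_zero_of_pmfExp_nonpos (hμ : ∀ a, 0 ≤ μ a) {f : α → ℝ}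
    (hf : ∀ a, 0 ≤ f a) (hE : pmfExp μ f ≤ 0) :
    pmfProb μ (fun a => 0 < f a) = 0 := by
  have hterm : ∀ a, μ a * f a = 0 := fun a =>
    (sum_eq_zero_iff_of_nonneg fun a _ => mul_nonneg (hμ a) (hf a)).1
      (hE.antisymm (pmfExp_nonneg hμ hf)) a (mem_univ a)
  refine sum_eq_zero fun a _ => ?_
  split_ifs with h
  · simpa [h.ne'] using hterm a
  · rfl

lemma pmfProb_mul_lt_le_inv (hμ : ∀ a, 0 ≤ μ a) {f : α → ℝ} (hf : ∀ a, 0 ≤ f a)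
    {B γ : ℝ} (hγ : 0 < γ) (hE : pmfExp μ f ≤ B) :
    pmfProb μ (fun a => γ * B < f a) ≤ 1 / γ := by
  rcases ((pmfExp_nonneg hμ hf).trans hE).eq_or_lt with rfl | hB
  · rw [mul_zero, pmfProb_pos_eq_zero_of_pmfExp_nonpos hμ hf hE]
    positivity
  · have := (mul_pmfProb_lt_le_pmfExp hμ hf (γ * B)).trans hE
    rw [le_div_iff₀ hγ]
    exact le_of_mul_le_mul_right (by linarith) hB

theorem one_sub_inv_sqrt_le_pmfProb_card_filter {ι : Type*} [Fintype ι] (hμ : IsPMF μ)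
    (G : ι → α → Prop) {γ : ℝ} (hγ : 0 < γ) (hG : ∀ i, pmfProb μ (fun a => ¬ G i a) ≤ 1 / γ) :
    1 - 1 / √γ ≤
      pmfProb μ (fun a => (Fintype.card ι : ℝ) * (1 - 1 / √γ) ≤ #{i | G i a}) := by
  rcases isEmpty_or_nonempty ι with hι | hι
  · simp [pmfProb, hμ.2]
  set t : ℝ := Fintype.card ι / √γ
  have ht : 0 < t := by positivity
  have hEbad : pmfExp μ (fun a => (#{i | ¬ G i a} : ℝ)) ≤ t * (1 / √γ) := by
    calc _ = ∑ i, pmfProb μ (fun a => ¬ G i a) := pmfExp_card_filter _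
      _ ≤ ∑ _i : ι, 1 / γ := sum_le_sum fun i _ => hG i
      _ = t * (1 / √γ) := by
        rw [sum_const, card_univ, nsmul_eq_mul, div_mul_div_comm, mul_one,
          Real.mul_self_sqrt hγ.le, mul_one_div]
  have hmarkov := (mul_pmfProb_lt_le_pmfExp hμ.1 (fun a => Nat.cast_nonneg _) t).trans hEbad
  have hevent : ∀ a, ¬ ((Fintype.card ι : ℝ) * (1 - 1 / √γ) ≤ #{i | G i a}) ↔
      t < #{i | ¬ G i a} := by
    intro a
    have hsplit := congrArg (Nat.cast (R := ℝ)) (card_filter_add_card_filter_not (s := univ) (G · a))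
    push_cast at hsplit
    rw [card_univ] at hsplit
    rw [not_le, show t = Fintype.card ι * (1 / √γ) by ring]
    constructor <;> intro h <;> nlinarith
  rw [← sub_sub_cancel 1 (pmfProb μ _), ← pmfProb_not hμ, funext fun a => propext (hevent a)]
  linarith [le_of_mul_le_mul_left hmarkov ht]

end Pmf

section Channel

variable {𝒳 𝒴 : Type*} [Fintype 𝒴] {W : 𝒳 → 𝒴 → ℝ}

lemma Bhat_nonneg (W : 𝒳 → 𝒴 → ℝ) (x x' : 𝒳) : 0 ≤ Bhat W x x' :=
  sum_nonneg fun _ _ => Real.sqrt_nonneg _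

lemma Pem_nonneg (hW : ∀ x y, 0 ≤ W x y) {M : ℕ} (c : Fin M → 𝒳) (m : Fin M) :
    0 ≤ Pem W c m :=
  sum_nonneg fun y _ => mul_nonneg (hW _ _) (by split_ifs <;> norm_num)

lemma Pem_le_sum_Bhat (hW : ∀ x y, 0 ≤ W x y) {M : ℕ} (c : Fin M → 𝒳) (m : Fin M) :
    Pem W c m ≤ ∑ k ∈ univ.erase m, Bhat W (c m) (c k) := by
  simp only [Bhat]
  rw [sum_comm]
  refine sum_le_sum fun y _ => ?_
  split_ifs with herr
  · obtain ⟨k, hk, hle⟩ := herr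
    calc W (c m) y * 1 = √(W (c m) y * W (c m) y) := by rw [mul_one, Real.sqrt_mul_self (hW _ _)]
      _ ≤ √(W (c m) y * W (c k) y) :=
        Real.sqrt_le_sqrt (mul_le_mul_of_nonneg_left hle (hW _ _))
      _ ≤ ∑ k ∈ univ.erase m, √(W (c m) y * W (c k) y) :=
        single_le_sum (f := fun k => √(W (c m) y * W (c k) y))
          (fun _ _ => Real.sqrt_nonneg _) (mem_erase.2 ⟨hk, mem_univ k⟩)
  · rw [mul_zero]
    exact sum_nonneg fun _ _ => Real.sqrt_nonneg _

lemma Pem_rpow_le_sum_Bhat_rpow (hW : ∀ x y, 0 ≤ W x y) {M : ℕ} (c : Fin M → 𝒳) (m : Fin M)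
    {s : ℝ} (hs0 : 0 < s) (hs1 : s ≤ 1) :
    Pem W c m ^ s ≤ ∑ k ∈ univ.erase m, Bhat W (c m) (c k) ^ s :=
  (Real.rpow_le_rpow (Pem_nonneg hW c m) (Pem_le_sum_Bhat hW c m) hs0.le).trans
    (Real.rpow_sum_le_sum_rpow _ (fun _ _ => Bhat_nonneg _ _ _) hs0 hs1)

end Channel

namespace PairwiseIndepEnsemble

variable {𝒳 : Type*} [Fintype 𝒳] {M : ℕ} {μ : (Fin M → 𝒳) → ℝ} {Q : 𝒳 → ℝ}

lemma pmfExp_apply_pair (hμ : PairwiseIndepEnsemble μ Q) {m k : Fin M} (hmk : m ≠ k)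
    (g : 𝒳 → 𝒳 → ℝ) :
    pmfExp μ (fun c => g (c m) (c k)) = ∑ x, ∑ x', Q x * Q x' * g x x' := by
  rw [pmfExp, ← sum_fiberwise univ (fun c => (c m, c k)), Fintype.sum_prod_type]
  refine sum_congr rfl fun x _ => sum_congr rfl fun x' _ => ?_
  rw [← hμ.2.2.2 m k hmk x x', pmfProb, sum_filter, sum_mul]
  refine sum_congr rfl fun c _ => ?_
  simp only [Prod.mk.injEq]
  split_ifs with hc
  · rw [hc.1, hc.2]
  · rw [zero_mul]

variable {𝒴 : Type*} [Fintype 𝒴] {W : 𝒳 → 𝒴 → ℝ}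

lemma pmfExp_Pem_rpow_le (hμ : PairwiseIndepEnsemble μ Q) (hW : ∀ x y, 0 ≤ W x y)
    (m : Fin M) {s : ℝ} (hs0 : 0 < s) (hs1 : s ≤ 1) :
    pmfExp μ (fun c => Pem W c m ^ s) ≤
      ((M : ℝ) - 1) * ∑ x, ∑ x', Q x * Q x' * Bhat W x x' ^ s :=
  calc pmfExp μ (fun c => Pem W c m ^ s)
      ≤ pmfExp μ (fun c => ∑ k ∈ univ.erase m, Bhat W (c m) (c k) ^ s) :=
        pmfExp_mono hμ.1.1 fun c => Pem_rpow_le_sum_Bhat_rpow hW c m hs0 hs1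
    _ = ∑ _k ∈ univ.erase m, ∑ x, ∑ x', Q x * Q x' * Bhat W x x' ^ s := by
        rw [pmfExp_sum]
        exact sum_congr rfl fun k hk =>
          hμ.pmfExp_apply_pair (ne_of_mem_erase hk).symm (fun x x' => Bhat W x x' ^ s)
    _ = _ := by
        rw [sum_const, card_erase_of_mem (mem_univ m), card_univ, Fintype.card_fin,
          nsmul_eq_mul, Nat.cast_pred (Fin.pos m)]

lemma pmfProb_lt_Pem_le (hμ : PairwiseIndepEnsemble μ Q) (hW : ∀ x y, 0 ≤ W x y)
    (m : Fin M) {ρ γ : ℝ} (hρ : 1 ≤ ρ) (hγ : 0 < γ) :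
    pmfProb μ (fun c => γ ^ ρ * (((M : ℝ) - 1) *
      ∑ x, ∑ x', Q x * Q x' * Bhat W x x' ^ (1 / ρ)) ^ ρ < Pem W c m) ≤ 1 / γ := by
  have hρ0 : 0 < ρ := one_pos.trans_le hρ
  have hE := hμ.pmfExp_Pem_rpow_le hW m (one_div_pos.2 hρ0) ((div_le_one hρ0).2 hρ)
  set B := ((M : ℝ) - 1) * ∑ x, ∑ x', Q x * Q x' * Bhat W x x' ^ (1 / ρ)
  have hPem := Pem_nonneg hW (M := M)
  have hB : 0 ≤ B := (pmfExp_nonneg hμ.1.1 fun c => Real.rpow_nonneg (hPem c m) _).trans hE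
  have hevent : ∀ c, γ ^ ρ * B ^ ρ < Pem W c m ↔ γ * B < Pem W c m ^ (1 / ρ) := fun c => by
    rw [← Real.mul_rpow hγ.le hB, one_div,
      Real.lt_rpow_inv_iff_of_pos (mul_nonneg hγ.le hB) (hPem c m) hρ0]
  simp only [hevent]
  exact pmfProb_mul_lt_le_inv hμ.1.1 (fun c => Real.rpow_nonneg (hPem c m) _) hγ hE

end PairwiseIndepEnsemble

theorem theorem1_finite_length_general
    {𝒳 𝒴 : Type*} [Fintype 𝒳] [Fintype 𝒴]
    (n : ℕ)
    (W : (Fin n → 𝒳) → (Fin n → 𝒴) → ℝ) (hW : IsChannel W)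
    (Q : (Fin n → 𝒳) → ℝ) (M' : ℕ)
    (μ : (Fin M' → (Fin n → 𝒳)) → ℝ) (hμ : PairwiseIndepEnsemble μ Q)
    (ρ : ℝ) (hρ : 1 ≤ ρ) (γ : ℝ) (hγ : 1 < γ)
    (Φ : (Fin M' → (Fin n → 𝒳)) → ℕ)
    (hΦ : ∀ c, Φ c = (Finset.univ.filter (fun m : Fin M' =>
      Pem W c m ≤
        γ ^ ρ *
          (((M' : ℝ) - 1) * ∑ x, ∑ x', Q x * Q x' * Bhat W x x' ^ (1/ρ)) ^ ρ)).card) :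
    1 - 1 / Real.sqrt γ ≤
      pmfProb μ (fun c => (M' : ℝ) * (1 - 1 / Real.sqrt γ) ≤ (Φ c : ℝ)) := by
  have hγ0 : 0 < γ := one_pos.trans hγ
  have hgood := one_sub_inv_sqrt_le_pmfProb_card_filter hμ.1
    (fun m c => Pem W c m ≤ γ ^ ρ *
      (((M' : ℝ) - 1) * ∑ x, ∑ x', Q x * Q x' * Bhat W x x' ^ (1/ρ)) ^ ρ) hγ0
    fun m => by simpa only [not_le] using hμ.pmfProb_lt_Pem_le hW.1 m hρ hγ0
  rw [Fintype.card_fin] at hgood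
  simpa only [hΦ] using hgood

/-- finite-length form of Theorem 1: with probability at least
`1 - 1/√γ`, at least a fraction `1 - 1/√γ` of the `M'` codewords satisfy the
expurgated bound. -/
theorem theorem1_finite_length
    {𝒳 𝒴 : Type*} [Fintype 𝒳] [Fintype 𝒴] [Nonempty 𝒳] [Nonempty 𝒴]
    (n : ℕ) (hn : 1 ≤ n)
    (W : (Fin n → 𝒳) → (Fin n → 𝒴) → ℝ) (hW : IsChannel W)
    (Q : (Fin n → 𝒳) → ℝ) (M' : ℕ) (hM' : 2 ≤ M')
    (μ : (Fin M' → (Fin n → 𝒳)) → ℝ) (hμ : PairwiseIndepEnsemble μ Q)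
    (ρ : ℝ) (hρ : 1 ≤ ρ) (γ : ℝ) (hγ : 1 < γ)
    (Φ : (Fin M' → (Fin n → 𝒳)) → ℕ)
    (hΦ : ∀ c, Φ c = (Finset.univ.filter (fun m : Fin M' =>
      Pem W c m ≤
        γ ^ ρ *
          (((M' : ℝ) - 1) * ∑ x, ∑ x', Q x * Q x' * Bhat W x x' ^ (1/ρ)) ^ ρ)).card) :
    1 - 1 / Real.sqrt γ ≤
      pmfProb μ (fun c => (M' : ℝ) * (1 - 1 / Real.sqrt γ) ≤ (Φ c : ℝ)) :=
  theorem1_finite_length_general n W hW Q M' μ hμ ρ hρ γ hγ Φ hΦ
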